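/- Joint lower bound used in the proof of the list matching lemma: under Gumbel-max list sampling, for every j ∈ {1,…,N}, Pr[Y = j and j ∈ {X^(1), …, X^(K)}] ≥ K / ( Σ_{i=1}^{N} [ max{ q_i/q_j , p_i/p_j } + (K − 1)·q_i/q_j ] ). -/

import Mathlib

/-!
For each list index `k`, let `E k` (`raceEvent`) be the event that the clock `S j k` beats every
other clock `S i k'` once these are rescaled by `raceWeight`: by `q i / q j` in the other columns
and by `max (q i / q j) (p i / p j)` in its own column `k`. On `E k` the item `j` wins the
`q`-race, so `Y = j`, and the `p`-race of column `k`, so `X k = j`. The clocks `S j k'` carry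
weight `1`, which makes the events `E k` disjoint, and by the race formula for independent
exponential clocks each `E k` has probability `1 / ∑ m, raceWeight m`, the denominator of the bound.
-/

open MeasureTheory ProbabilityTheory Set Function

namespace ProbabilityTheory

theorem expMeasure_Ioi {r t : ℝ} (hr : 0 < r) (ht : 0 ≤ t) :
    expMeasure r (Ioi t) = ENNReal.ofReal (Real.exp (-(r * t))) := by
  have := isProbabilityMeasure_expMeasure hr
  have hexp_le : Real.exp (-(r * t)) ≤ 1 := Real.exp_le_one_iff.2 (by nlinarith)
  rw [← compl_Iic, prob_compl_eq_one_sub measurableSet_Iic, ← ofReal_cdf, cdf_expMeasure_eq hr,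
    if_pos ht, ← ENNReal.ofReal_one, ← ENNReal.ofReal_sub _ (by linarith), sub_sub_cancel]

theorem setLIntegral_Ici_exp_neg_mul_expMeasure {r s : ℝ} (hr : 0 < r) (hs : 0 ≤ s) :
    ∫⁻ t in Ici 0, ENNReal.ofReal (Real.exp (-(s * t))) ∂expMeasure r
      = ENNReal.ofReal (r / (r + s)) := by
  have hrs : -(r + s) < 0 := by linarith
  change ∫⁻ t in Ici 0, _ ∂(volume.withDensity (exponentialPDF r)) = _
  rw [restrict_withDensity measurableSet_Ici,
    lintegral_withDensity_eq_lintegral_mul _ (f := exponentialPDF r)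
      (measurable_exponentialPDFReal r).ennreal_ofReal (by fun_prop),
    setLIntegral_congr_fun measurableSet_Ici
      (g := fun t => ENNReal.ofReal (r * Real.exp (-(r + s) * t))) fun t ht => by
        rw [Pi.mul_apply, exponentialPDF_of_nonneg ht,
          ← ENNReal.ofReal_mul (by positivity), mul_assoc, ← Real.exp_add]
        ring_nf,
    ← ofReal_integral_eq_lintegral_ofReal
      ((integrableOn_exp_mul_Ioi hrs 0).congr_set_ae Ioi_ae_eq_Ici.symm |>.const_mul r)
      (Filter.Eventually.of_forall fun t => by positivity),
    integral_Ici_eq_integral_Ioi, integral_const_mul, integral_exp_mul_Ioi hrs,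
    mul_zero, Real.exp_zero, neg_div_neg_eq, mul_one_div]

theorem pi_expMeasure_Ioi_mul {ι : Type*} [Fintype ι] {r c : ι → ℝ} (hr : ∀ i, 0 < r i)
    (hc : ∀ i, 0 ≤ c i) {t : ℝ} (ht : 0 ≤ t) :
    Measure.pi (fun i => expMeasure (r i)) (univ.pi fun i => Ioi (c i * t))
      = ENNReal.ofReal (Real.exp (-((∑ i, c i * r i) * t))) := by
  have : ∀ i, IsProbabilityMeasure (expMeasure (r i)) :=
    fun i => isProbabilityMeasure_expMeasure (hr i)
  simp_rw [Measure.pi_pi, expMeasure_Ioi (hr _) (mul_nonneg (hc _) ht),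
    ← ENNReal.ofReal_prod_of_nonneg (fun i _ => (Real.exp_pos _).le), ← Real.exp_sum,
    Finset.sum_mul, ← Finset.sum_neg_distrib, mul_right_comm _ (r _), mul_comm (r _)]

theorem expMeasure_prod_pi_race {ι : Type*} [Fintype ι] {r₀ : ℝ} {r c : ι → ℝ}
    (hr₀ : 0 < r₀) (hr : ∀ i, 0 < r i) (hc : ∀ i, 0 ≤ c i) :
    ((expMeasure r₀).prod (Measure.pi fun i => expMeasure (r i)))
        {z | 0 ≤ z.1 ∧ ∀ i, c i * z.1 < z.2 i}
      = ENNReal.ofReal (r₀ / (r₀ + ∑ i, c i * r i)) := by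
  have : ∀ i, IsProbabilityMeasure (expMeasure (r i)) :=
    fun i => isProbabilityMeasure_expMeasure (hr i)
  have hslice (t : ℝ) :
      Measure.pi (fun i => expMeasure (r i)) (Prod.mk t ⁻¹' {z | 0 ≤ z.1 ∧ ∀ i, c i * z.1 < z.2 i})
        = (Ici 0).indicator (fun t => ENNReal.ofReal (Real.exp (-((∑ i, c i * r i) * t)))) t := by
    by_cases ht : 0 ≤ t
    · rw [indicator_of_mem (mem_Ici.2 ht), ← pi_expMeasure_Ioi_mul hr hc ht]
      congr 1
      ext x
      simp [ht]
    · rw [indicator_of_notMem (fun h => ht (mem_Ici.1 h))]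
      simp [ht]
  rw [Measure.prod_apply (by measurability), lintegral_congr hslice,
    lintegral_indicator measurableSet_Ici,
    setLIntegral_Ici_exp_neg_mul_expMeasure hr₀
      (Finset.sum_nonneg fun i _ => mul_nonneg (hc i) (hr i).le)]

theorem measure_race_of_iIndepFun {Ω ι : Type*} [MeasurableSpace Ω] [Fintype ι] [DecidableEq ι]
    {μ : Measure Ω} [IsProbabilityMeasure μ] {T : ι → Ω → ℝ} (hT : ∀ i, Measurable (T i))
    (hind : iIndepFun T μ) {r : ι → ℝ} (hr : ∀ i, 0 < r i)
    (hlaw : ∀ i, μ.map (T i) = expMeasure (r i)) (i₀ : ι) {c : ι → ℝ} (hc : ∀ i, 0 ≤ c i) :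
    μ {ω | 0 ≤ T i₀ ω ∧ ∀ i ≠ i₀, c i * T i₀ ω < T i ω}
      = ENNReal.ofReal (r i₀ / (r i₀ + ∑ i ∈ Finset.univ.erase i₀, c i * r i)) := by
  set J := Finset.univ.erase i₀
  let R : Ω → J → ℝ := fun ω i => T i ω
  have hR : Measurable R := measurable_pi_lambda _ fun i => hT i
  have hindep : IndepFun (T i₀) R μ :=
    (hind.indepFun_finset {i₀} J (by simp [J]) hT).comp
      (measurable_pi_apply (⟨i₀, Finset.mem_singleton_self i₀⟩ : ({i₀} : Finset ι)))
      measurable_id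
  have hRlaw : μ.map R = Measure.pi fun i : J => expMeasure (r i) := by
    rw [iIndepFun.map_fun_eq_pi_map (f := fun i : J => T i) (fun i => (hT i).aemeasurable)
      (hind.precomp Subtype.val_injective)]
    exact congrArg Measure.pi (funext fun i => hlaw i)
  have hjoint : μ.map (fun ω => (T i₀ ω, R ω))
      = (expMeasure (r i₀)).prod (Measure.pi fun i : J => expMeasure (r i)) := by
    rw [hindep.map_prod_eq_prod_map_map (hT i₀).aemeasurable hR.aemeasurable, hlaw, hRlaw]
  have hevent : {ω | 0 ≤ T i₀ ω ∧ ∀ i ≠ i₀, c i * T i₀ ω < T i ω}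
      = (fun ω => (T i₀ ω, R ω)) ⁻¹' {z | 0 ≤ z.1 ∧ ∀ i : J, c i * z.1 < z.2 i} := by
    ext ω
    simp [R, J]
  rw [hevent, ← Measure.map_apply ((hT i₀).prodMk hR) (by measurability), hjoint,
    expMeasure_prod_pi_race (r := fun i : J => r i) (hr i₀) (fun i => hr i) (fun i => hc i),
    Finset.sum_coe_sort J fun i => c i * r i]

end ProbabilityTheory

section GumbelListRace

variable {Ω α κ : Type*} [DecidableEq κ]

noncomputable def raceWeight (p q : α → ℝ) (j : α) (k : κ) (m : α × κ) : ℝ :=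
  if m.2 = k then max (q m.1 / q j) (p m.1 / p j) else q m.1 / q j

def raceEvent (S : α → κ → Ω → ℝ) (p q : α → ℝ) (j : α) (k : κ) : Set Ω :=
  {ω | 0 ≤ S j k ω ∧ ∀ m ≠ (j, k), raceWeight p q j k m * S j k ω < S m.1 m.2 ω}

theorem raceWeight_nonneg {p q : α → ℝ} (hq : ∀ i, 0 < q i) (j : α) (k : κ) (m : α × κ) :
    0 ≤ raceWeight p q j k m := by
  have := div_pos (hq m.1) (hq j)
  unfold raceWeight
  split_ifs
  · exact le_max_of_le_left this.le
  · exact this.le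

theorem raceWeight_self {p q : α → ℝ} (hp : ∀ i, 0 < p i) (hq : ∀ i, 0 < q i) (j : α)
    (k k' : κ) :
    raceWeight p q j k (j, k') = 1 := by
  unfold raceWeight
  split_ifs <;> simp [div_self (hq j).ne', div_self (hp j).ne']

theorem sum_raceWeight [Fintype α] [Fintype κ] (p q : α → ℝ) (j : α) (k : κ) :
    ∑ m, raceWeight p q j k m
      = ∑ i, (max (q i / q j) (p i / p j) + ((Fintype.card κ : ℝ) - 1) * (q i / q j)) := by
  rw [Fintype.sum_prod_type]
  refine Finset.sum_congr rfl fun i _ => ?_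
  have hsplit (k' : κ) : raceWeight p q j k (i, k')
      = q i / q j + if k' = k then max (q i / q j) (p i / p j) - q i / q j else 0 := by
    unfold raceWeight
    split_ifs <;> ring
  simp only [hsplit, Finset.sum_add_distrib, Finset.sum_const, Finset.card_univ, nsmul_eq_mul,
    Finset.sum_ite_eq', Finset.mem_univ, if_true]
  ring

theorem div_lt_div_of_div_le_of_mul_lt {a b s t w : ℝ} (ha : 0 < a) (hb : 0 < b) (hs : 0 ≤ s)
    (hw : b / a ≤ w) (h : w * s < t) : s / a < t / b := by
  rw [div_lt_div_iff₀ ha hb]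
  calc s * b = b / a * s * a := by field_simp
    _ < t * a := mul_lt_mul_of_pos_right ((mul_le_mul_of_nonneg_right hw hs).trans_lt h) ha

variable {S : α → κ → Ω → ℝ} {p q : α → ℝ} {j : α} {k : κ} {ω : Ω}

theorem div_q_lt_of_mem_raceEvent (hq : ∀ i, 0 < q i) (hω : ω ∈ raceEvent S p q j k) {i : α}
    (hi : i ≠ j) (k' : κ) : S j k ω / q j < S i k' ω / q i := by
  refine div_lt_div_of_div_le_of_mul_lt (hq j) (hq i) hω.1 ?_ (hω.2 (i, k') (by simp [hi]))
  unfold raceWeight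
  split_ifs
  · exact le_max_left _ _
  · exact le_rfl

theorem div_p_lt_of_mem_raceEvent (hp : ∀ i, 0 < p i) (hω : ω ∈ raceEvent S p q j k) {i : α}
    (hi : i ≠ j) : S j k ω / p j < S i k ω / p i :=
  div_lt_div_of_div_le_of_mul_lt (hp j) (hp i) hω.1 (by simp [raceWeight])
    (hω.2 (i, k) (by simp [hi]))

theorem eq_of_mem_raceEvent_of_forall_ne_iInf_lt [Finite κ] (hq : ∀ i, 0 < q i)
    (hω : ω ∈ raceEvent S p q j k) {y : α}
    (hy : ∀ i ≠ y, (⨅ k', S y k' ω) / q y < (⨅ k', S i k' ω) / q i) : y = j := by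
  by_contra hyj
  have : Nonempty κ := ⟨k⟩
  obtain ⟨k', hk'⟩ := exists_eq_ciInf_of_finite (f := fun k' => S y k' ω)
  have hjk : (⨅ k', S j k' ω) / q j ≤ S j k ω / q j :=
    div_le_div_of_nonneg_right (ciInf_le (Finite.bddBelow_range _) k) (hq j).le
  have := hy j (Ne.symm hyj)
  rw [← hk'] at this
  linarith [div_q_lt_of_mem_raceEvent hq hω hyj k']

theorem eq_of_mem_raceEvent_of_forall_ne_lt (hp : ∀ i, 0 < p i)
    (hω : ω ∈ raceEvent S p q j k) {x : α}
    (hx : ∀ i ≠ x, S x k ω / p x < S i k ω / p i) : x = j := by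
  by_contra hxj
  exact lt_asymm (hx j (Ne.symm hxj)) (div_p_lt_of_mem_raceEvent hp hω hxj)

theorem pairwise_disjoint_raceEvent (hp : ∀ i, 0 < p i) (hq : ∀ i, 0 < q i) :
    Pairwise (Disjoint on raceEvent S p q j) := by
  intro k k' hkk'
  refine disjoint_left.2 fun ω hω hω' => lt_asymm (a := S j k ω) (b := S j k' ω) ?_ ?_
  · simpa [raceWeight_self hp hq] using hω.2 (j, k') (by simp [Ne.symm hkk'])
  · simpa [raceWeight_self hp hq] using hω'.2 (j, k) (by simp [hkk'])

theorem measurableSet_raceEvent [MeasurableSpace Ω] [Countable α] [Countable κ]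
    (hS : ∀ i k, Measurable (S i k)) :
    MeasurableSet (raceEvent S p q j k) := by
  unfold raceEvent
  measurability

theorem measure_raceEvent [MeasurableSpace Ω] [Fintype α] [DecidableEq α] [Fintype κ]
    {μ : Measure Ω} [IsProbabilityMeasure μ] (hp : ∀ i, 0 < p i) (hq : ∀ i, 0 < q i)
    (hS : ∀ i k, Measurable (S i k)) (hind : iIndepFun (fun m : α × κ => S m.1 m.2) μ)
    (hlaw : ∀ i k, μ.map (S i k) = expMeasure 1) (j : α) (k : κ) :
    μ (raceEvent S p q j k) = ENNReal.ofReal (1 / ∑ m, raceWeight p q j k m) := by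
  have := measure_race_of_iIndepFun (fun m => hS m.1 m.2) hind (fun _ => one_pos)
    (fun m => hlaw m.1 m.2) (j, k) (raceWeight_nonneg (p := p) hq j k)
  rw [← Finset.add_sum_erase _ _ (Finset.mem_univ (j, k)), raceWeight_self hp hq]
  simpa only [raceEvent, mul_one] using this

end GumbelListRace

theorem list_matching_joint_bound_general
    {Ω : Type*} [MeasurableSpace Ω] (μ : Measure Ω) [IsProbabilityMeasure μ]
    (N K : ℕ)
    (p q : Fin N → ℝ) (hp : ∀ i, 0 < p i) (hq : ∀ i, 0 < q i)
    (S : Fin N → Fin K → Ω → ℝ) (hSmeas : ∀ i k, Measurable (S i k))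
    (hSindep : iIndepFun
      (fun ik : Fin N × Fin K => S ik.1 ik.2) μ)
    (hSexp : ∀ i k, μ.map (S i k) = expMeasure 1)
    (Y : Ω → Fin N)
    (X : Fin K → Ω → Fin N)
    -- `Y` is a.s. the unique argmin of `i ↦ (min_k S i k) / q i`
    (hY : ∀ᵐ ω ∂μ, ∀ i : Fin N, i ≠ Y ω →
      (⨅ k : Fin K, S (Y ω) k ω) / q (Y ω) < (⨅ k : Fin K, S i k ω) / q i)
    -- each `X k` is a.s. the unique argmin of `i ↦ S i k / p i`
    (hX : ∀ᵐ ω ∂μ, ∀ k : Fin K, ∀ i : Fin N, i ≠ X k ω →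
      S (X k ω) k ω / p (X k ω) < S i k ω / p i)
    : ∀ j : Fin N,
      ENNReal.ofReal ((K : ℝ) /
          ∑ i : Fin N, (max (q i / q j) (p i / p j) + ((K : ℝ) - 1) * (q i / q j)))
        ≤ μ {ω | Y ω = j ∧ ∃ k : Fin K, X k ω = j} := by
  intro j
  have hE (k : Fin K) : μ (raceEvent S p q j k) = ENNReal.ofReal (1 / ∑ i : Fin N,
      (max (q i / q j) (p i / p j) + ((K : ℝ) - 1) * (q i / q j))) := by
    rw [measure_raceEvent hp hq hSmeas hSindep hSexp, sum_raceWeight, Fintype.card_fin]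
  have hsub : ⋃ k, raceEvent S p q j k ≤ᵐ[μ] {ω | Y ω = j ∧ ∃ k : Fin K, X k ω = j} := by
    filter_upwards [hY, hX] with ω hYω hXω hω
    obtain ⟨k, hk⟩ := mem_iUnion.1 hω
    exact ⟨eq_of_mem_raceEvent_of_forall_ne_iInf_lt hq hk hYω,
      k, eq_of_mem_raceEvent_of_forall_ne_lt hp hk (hXω k)⟩
  calc _ = ∑ k : Fin K, μ (raceEvent S p q j k) := by
        rw [Finset.sum_congr rfl fun k _ => hE k, Finset.sum_const, Finset.card_univ,
          Fintype.card_fin, nsmul_eq_mul, ← ENNReal.ofReal_natCast,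
          ← ENNReal.ofReal_mul (Nat.cast_nonneg K), mul_one_div]
    _ = μ (⋃ k, raceEvent S p q j k) := by
        rw [measure_iUnion (pairwise_disjoint_raceEvent hp hq)
          fun k => measurableSet_raceEvent hSmeas, tsum_fintype]
    _ ≤ _ := measure_mono_ae hsub

/-- **Joint lower bound from the proof of the list matching lemma.**
Under Gumbel-max list sampling, for every `j`,
`Pr[Y = j ∧ j ∈ {X 1, …, X K}] ≥ K / ∑ i (max (q i / q j) (p i / p j) + (K-1) * q i / q j)`. -/
theorem list_matching_joint_bound
    {Ω : Type*} [MeasurableSpace Ω] (μ : Measure Ω) [IsProbabilityMeasure μ]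
    (N K : ℕ) (hN : 0 < N) (hK : 0 < K)
    (p q : Fin N → ℝ) (hp : ∀ i, 0 < p i) (hq : ∀ i, 0 < q i)
    (hpsum : ∑ i, p i = 1) (hqsum : ∑ i, q i = 1)
    (S : Fin N → Fin K → Ω → ℝ) (hSmeas : ∀ i k, Measurable (S i k))
    (hSindep : iIndepFun
      (fun ik : Fin N × Fin K => S ik.1 ik.2) μ)
    (hSexp : ∀ i k, μ.map (S i k) = expMeasure 1)
    (Y : Ω → Fin N) (hYmeas : Measurable Y)
    (X : Fin K → Ω → Fin N) (hXmeas : ∀ k, Measurable (X k))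
    -- `Y` is a.s. the unique argmin of `i ↦ (min_k S i k) / q i`
    (hY : ∀ᵐ ω ∂μ, ∀ i : Fin N, i ≠ Y ω →
      (⨅ k : Fin K, S (Y ω) k ω) / q (Y ω) < (⨅ k : Fin K, S i k ω) / q i)
    -- each `X k` is a.s. the unique argmin of `i ↦ S i k / p i`
    (hX : ∀ᵐ ω ∂μ, ∀ k : Fin K, ∀ i : Fin N, i ≠ X k ω →
      S (X k ω) k ω / p (X k ω) < S i k ω / p i)
    : ∀ j : Fin N,
      ENNReal.ofReal ((K : ℝ) /
          ∑ i : Fin N, (max (q i / q j) (p i / p j) + ((K : ℝ) - 1) * (q i / q j)))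
        ≤ μ {ω | Y ω = j ∧ ∃ k : Fin K, X k ω = j} :=
  list_matching_joint_bound_general μ N K p q hp hq S hSmeas hSindep hSexp Y X hY hX
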